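/- Let S = diag(e^{iφ₁}, e^{iφ₂}) be a diagonal 2×2 unitary matrix and let W be a 4×4 unitary matrix with entries w_{st} = (1/2)e^{iθ_{st}} (s,t∈{1,2,3,4}). Suppose each of the following differences is an odd multiple of π/2 (i.e. equals ±(π/2 + lπ) for some l∈{0,1,−1}): for all k,j∈{1,2}: (φ₁+θ_{k,j})−(φ₂+θ_{k+1,j+1}), (φ₁+θ_{k,4})−(φ₂+θ_{k+1,4}), (φ₁+θ_{4,j})−(φ₂+θ_{4,j+1}), (φ₁+θ_{3,j})−(φ₂+θ_{1,j+1}), (φ₁+θ_{k,3})−(φ₂+θ_{k+1,1}); and also (φ₁+θ_{33})−(φ₂+θ_{11}), (φ₁+θ_{34})−(φ₂+θ_{14}), (φ₁+θ_{43})−(φ₂+θ_{41}), and φ₁−φ₂. Then the two bases {|φ_{n,m}⟩} and {(S⊗W)|φ_{p,q}⟩} of C²⊗C⁴ are mutually unbiased: |⟨φ_{n,m}|(S⊗W)|φ_{p,q}⟩| = 1/(2√2) for all n,p∈{0,1}, m,q∈{0,1,2,3}. -/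

import Mathlib

open scoped Kronecker

noncomputable def phi (d : ℕ) (n : Fin 2) (m : Fin d) : EuclideanSpace ℂ (Fin 2 × Fin d) :=
  WithLp.toLp 2 fun (p : Fin 2 × Fin d) =>
    (Real.sqrt 2 : ℂ)⁻¹ * (-1 : ℂ) ^ ((n : ℕ) * (p.1 : ℕ)) *
      (if (p.2 : ℕ) = (if (m : ℕ) = d - 1 then d - 1 else ((m : ℕ) + (p.1 : ℕ)) % (d - 1))
        then 1 else 0)

noncomputable def psi (d : ℕ) (S : Matrix (Fin 2) (Fin 2) ℂ) (W : Matrix (Fin d) (Fin d) ℂ)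
    (n : Fin 2) (m : Fin d) : EuclideanSpace ℂ (Fin 2 × Fin d) :=
  WithLp.toLp 2 ((S ⊗ₖ W).mulVec (phi d n m))

/-- `x` is an odd multiple of `π/2`, i.e. `x = ±(π/2 + lπ)` for some `l ∈ {0, 1, -1}`. -/
def OddPiHalf (x : ℝ) : Prop :=
  ∃ l : ℤ, l ∈ ({0, 1, -1} : Set ℤ) ∧
    (x = Real.pi / 2 + l * Real.pi ∨ x = -(Real.pi / 2 + l * Real.pi))

lemma oddPiHalf_congr {x y : ℝ} (h : OddPiHalf x) (e : y = x) : OddPiHalf y := e ▸ h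

lemma expI_of_oddPiHalf {x : ℝ} (h : OddPiHalf x) :
    Complex.exp (x * Complex.I) = Complex.I ∨ Complex.exp (x * Complex.I) = -Complex.I := by
  obtain ⟨l, hl, hx⟩ := h
  simp only [Set.mem_insert_iff, Set.mem_singleton_iff] at hl
  have h' : Real.cos x = 0 ∧ (Real.sin x = 1 ∨ Real.sin x = -1) := by
    rcases hl with rfl | rfl | rfl <;> rcases hx with rfl | rfl <;> push_cast <;>
      norm_num [Real.cos_add, Real.sin_add, Real.cos_neg, Real.sin_neg]
  obtain ⟨hc, hs⟩ := h'
  rw [Complex.exp_mul_I, ← Complex.ofReal_cos, ← Complex.ofReal_sin, hc]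
  rcases hs with hs | hs <;> rw [hs] <;> simp

lemma norm_exp_add_sign {α β : ℝ} {s : ℂ} (hs : s = 1 ∨ s = -1)
    (h : OddPiHalf (α - β)) :
    ‖Complex.exp (α * Complex.I) + s * Complex.exp (β * Complex.I)‖ = Real.sqrt 2 := by
  have hfac : Complex.exp (α * Complex.I) + s * Complex.exp (β * Complex.I)
      = (Complex.exp (((α - β : ℝ) : ℂ) * Complex.I) + s) * Complex.exp (β * Complex.I) := by
    rw [add_mul, ← Complex.exp_add]; push_cast; ring_nf
  rw [hfac, norm_mul, Complex.norm_exp_ofReal_mul_I, mul_one]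
  rcases expI_of_oddPiHalf h with he | he <;> rcases hs with rfl | rfl <;> rw [he] <;>
    (rw [Complex.norm_def]; norm_num [Complex.normSq_apply])

def idx (m : Fin 4) (a : Fin 2) : Fin 4 :=
  ⟨if (m : ℕ) = 3 then 3 else ((m : ℕ) + (a : ℕ)) % 3, by split <;> omega⟩

set_option maxHeartbeats 1000000 in
lemma psi_apply (φ₁ φ₂ : ℝ) (W : Matrix (Fin 4) (Fin 4) ℂ) (p : Fin 2) (q : Fin 4)
    (a : Fin 2) (b : Fin 4) :
    psi 4 (Matrix.diagonal ![Complex.exp (φ₁ * Complex.I),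
        Complex.exp (φ₂ * Complex.I)]) W p q (a, b)
      = (Real.sqrt 2 : ℂ)⁻¹ * (-1) ^ ((p : ℕ) * (a : ℕ)) *
          Complex.exp ((if (a : ℕ) = 0 then φ₁ else φ₂) * Complex.I) * W b (idx q a) := by
  simp only [psi, Matrix.mulVec, dotProduct, WithLp.ofLp_toLp, Fintype.sum_prod_type,
    Matrix.kroneckerMap_apply, phi]
  fin_cases a <;> fin_cases q <;>
    simp [Fin.sum_univ_succ, Matrix.diagonal, idx, Fin.ext_iff,
      show (Fin.succ 2 : Fin 4) = 3 from rfl] <;> ring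

set_option maxHeartbeats 1000000 in
lemma inner_eq (φ₁ φ₂ : ℝ) (W : Matrix (Fin 4) (Fin 4) ℂ) (n p : Fin 2) (m q : Fin 4) :
    (inner ℂ (phi 4 n m) (psi 4 (Matrix.diagonal ![Complex.exp (φ₁ * Complex.I),
        Complex.exp (φ₂ * Complex.I)]) W p q) : ℂ)
      = (Real.sqrt 2 : ℂ)⁻¹ * (Real.sqrt 2 : ℂ)⁻¹ *
          (Complex.exp (φ₁ * Complex.I) * W (idx m 0) (idx q 0) +
            (-1) ^ ((n : ℕ) + (p : ℕ)) * Complex.exp (φ₂ * Complex.I) * W (idx m 1) (idx q 1)) := by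
  rw [PiLp.inner_apply]
  simp only [Fintype.sum_prod_type]
  simp only [psi_apply, phi]
  fin_cases m <;>
    simp [Fin.sum_univ_succ, idx, map_mul, map_pow, map_inv₀, Complex.conj_ofReal,
      pow_add, show (Fin.succ 2 : Fin 4) = 3 from rfl] <;> ring

lemma final_norm (φ₁ φ₂ A B : ℝ) (k : ℕ) (h : OddPiHalf ((φ₁ + A) - (φ₂ + B))) :
    ‖(Real.sqrt 2 : ℂ)⁻¹ * (Real.sqrt 2 : ℂ)⁻¹ *
      (Complex.exp (φ₁ * Complex.I) * ((1 / 2 : ℂ) * Complex.exp (A * Complex.I)) +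
        (-1 : ℂ) ^ k * Complex.exp (φ₂ * Complex.I) *
          ((1 / 2 : ℂ) * Complex.exp (B * Complex.I)))‖ = 1 / (2 * Real.sqrt 2) := by
  have hA : Complex.exp (φ₁ * Complex.I) * ((1 / 2 : ℂ) * Complex.exp (A * Complex.I))
      = (1 / 2 : ℂ) * Complex.exp (((φ₁ + A : ℝ) : ℂ) * Complex.I) := by
    rw [Complex.ofReal_add, add_mul, Complex.exp_add]; ring
  have hB : (-1 : ℂ) ^ k * Complex.exp (φ₂ * Complex.I) *
        ((1 / 2 : ℂ) * Complex.exp (B * Complex.I))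
      = (1 / 2 : ℂ) * ((-1 : ℂ) ^ k * Complex.exp (((φ₂ + B : ℝ) : ℂ) * Complex.I)) := by
    rw [Complex.ofReal_add, add_mul, Complex.exp_add]; ring
  rw [hA, hB, ← mul_add, show (Real.sqrt 2 : ℂ)⁻¹ * (Real.sqrt 2 : ℂ)⁻¹ *
      ((1 / 2 : ℂ) * (Complex.exp (((φ₁ + A : ℝ) : ℂ) * Complex.I) +
        (-1 : ℂ) ^ k * Complex.exp (((φ₂ + B : ℝ) : ℂ) * Complex.I)))
    = (Real.sqrt 2 : ℂ)⁻¹ * (Real.sqrt 2 : ℂ)⁻¹ * (1 / 2 : ℂ) *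
        (Complex.exp (((φ₁ + A : ℝ) : ℂ) * Complex.I) +
          (-1 : ℂ) ^ k * Complex.exp (((φ₂ + B : ℝ) : ℂ) * Complex.I)) from by ring]
  have hs : (-1 : ℂ) ^ k = 1 ∨ (-1 : ℂ) ^ k = -1 := by
    rcases Nat.even_or_odd k with hk | hk
    · exact Or.inl (hk.neg_one_pow)
    · exact Or.inr (hk.neg_one_pow)
  rw [norm_mul, norm_exp_add_sign hs h]
  have h2 : Real.sqrt 2 * Real.sqrt 2 = 2 := Real.mul_self_sqrt (by norm_num)
  have h2' : Real.sqrt 2 ≠ 0 := by positivity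
  rw [norm_mul, norm_mul]
  simp only [norm_inv, Complex.norm_real, Real.norm_eq_abs,
    abs_of_nonneg (Real.sqrt_nonneg 2)]
  rw [show ‖(1 / 2 : ℂ)‖ = 1 / 2 by norm_num]
  field_simp

/-- Sufficient phase condition for mutual unbiasedness in `C² ⊗ C⁴`: if
`S = diag(e^{iφ₁}, e^{iφ₂})`, `W` is unitary with entries `w_{st} = (1/2)e^{iθ_{st}}`
(`1`-based indices), and the listed phase differences are all odd multiples of `π/2`, then
`{|φ_{n,m}⟩}` and `{(S⊗W)|φ_{p,q}⟩}` are mutually unbiased. -/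
theorem phase_condition_implies_mub (φ₁ φ₂ : ℝ) (θ : ℕ → ℕ → ℝ)
    (W : Matrix (Fin 4) (Fin 4) ℂ)
    (hW : W ∈ Matrix.unitaryGroup (Fin 4) ℂ)
    (hWent : ∀ s t : Fin 4,
      W s t = (1 / 2 : ℂ) * Complex.exp (θ ((s : ℕ) + 1) ((t : ℕ) + 1) * Complex.I))
    (h1 : ∀ k ∈ ({1, 2} : Set ℕ), ∀ j ∈ ({1, 2} : Set ℕ),
      OddPiHalf ((φ₁ + θ k j) - (φ₂ + θ (k+1) (j+1))) ∧
      OddPiHalf ((φ₁ + θ k 4) - (φ₂ + θ (k+1) 4)) ∧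
      OddPiHalf ((φ₁ + θ 4 j) - (φ₂ + θ 4 (j+1))) ∧
      OddPiHalf ((φ₁ + θ 3 j) - (φ₂ + θ 1 (j+1))) ∧
      OddPiHalf ((φ₁ + θ k 3) - (φ₂ + θ (k+1) 1)))
    (h2 : OddPiHalf ((φ₁ + θ 3 3) - (φ₂ + θ 1 1)))
    (h3 : OddPiHalf ((φ₁ + θ 3 4) - (φ₂ + θ 1 4)))
    (h4 : OddPiHalf ((φ₁ + θ 4 3) - (φ₂ + θ 4 1)))
    (h5 : OddPiHalf (φ₁ - φ₂)) :
    ∀ (n p : Fin 2) (m q : Fin 4),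
      ‖(inner ℂ (phi 4 n m)
          (psi 4 (Matrix.diagonal ![Complex.exp (φ₁ * Complex.I),
            Complex.exp (φ₂ * Complex.I)]) W p q) : ℂ)‖ = 1 / (2 * Real.sqrt 2) := by
  have m1 : (1 : ℕ) ∈ ({1, 2} : Set ℕ) := by norm_num
  have m2 : (2 : ℕ) ∈ ({1, 2} : Set ℕ) := by norm_num
  obtain ⟨a11, b11, c11, d11, e11⟩ := h1 1 m1 1 m1
  obtain ⟨a12, b12, c12, d12, e12⟩ := h1 1 m1 2 m2
  obtain ⟨a21, b21, c21, d21, e21⟩ := h1 2 m2 1 m1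
  obtain ⟨a22, b22, c22, d22, e22⟩ := h1 2 m2 2 m2
  intro n p m q
  fin_cases m <;> fin_cases q <;> rw [inner_eq, hWent, hWent]
  · exact final_norm _ _ _ _ _ a11
  · exact final_norm _ _ _ _ _ a12
  · exact final_norm _ _ _ _ _ e11
  · exact final_norm _ _ _ _ _ b11
  · exact final_norm _ _ _ _ _ a21
  · exact final_norm _ _ _ _ _ a22
  · exact final_norm _ _ _ _ _ e21
  · exact final_norm _ _ _ _ _ b21
  · exact final_norm _ _ _ _ _ d11
  · exact final_norm _ _ _ _ _ d12
  · exact final_norm _ _ _ _ _ h2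
  · exact final_norm _ _ _ _ _ h3
  · exact final_norm _ _ _ _ _ c11
  · exact final_norm _ _ _ _ _ c12
  · exact final_norm _ _ _ _ _ h4
  · exact final_norm _ _ _ _ _ (oddPiHalf_congr h5 (by norm_num [idx]))
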